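/- arXiv:2603.23820 — 2 statements merged into one kernel-verified Lean document; each statement's English description precedes it below -/
import Mathlib

section
/- Let T be a tree with radius r and diameter d, with m_i vertices of eccentricity i. If there is an index s with m_s < m_{s+1} = m_{s+2} = ... = m_d, then T has a nontrivial automorphism (equivalently F(T) ≥ 1). -/
open SimpleGraph

/-- A set `S` of vertices is a fixing set of `G` if the only automorphism of `G`
fixing every vertex of `S` is the identity. -/
def IsFixingSet {V : Type*} (G : SimpleGraph V) (S : Set V) : Prop :=
  ∀ φ : G ≃g G, (∀ v ∈ S, φ v = v) → ∀ v, φ v = v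

/-- The fixing number of a finite graph: the minimum cardinality of a fixing set. -/
noncomputable def fixingNumber {V : Type*} [Fintype V] (G : SimpleGraph V) : ℕ :=
  sInf {n | ∃ S : Finset V, S.card = n ∧ IsFixingSet G ↑S}

/-- A coloring is distinguishing if the only color-preserving automorphism is the identity. -/
def IsDistinguishingColoring {V α : Type*} (G : SimpleGraph V) (c : V → α) : Prop :=
  ∀ φ : G ≃g G, (∀ v, c (φ v) = c v) → ∀ v, φ v = v

/-- `G` is `D`-distinguishable if it has a distinguishing coloring with at most `D` colors. -/
def Distinguishable {V : Type*} (G : SimpleGraph V) (D : ℕ) : Prop :=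
  ∃ c : V → Fin D, IsDistinguishingColoring G c

/-- The distinguishing number of `G`. -/
noncomputable def distinguishingNumber {V : Type*} (G : SimpleGraph V) : ℕ :=
  sInf {D | Distinguishable G D}

/-- Eccentricity of a vertex: the supremum of distances to other vertices. -/
noncomputable def ecc {V : Type*} (G : SimpleGraph V) (v : V) : ℕ :=
  sSup (Set.range (G.dist v))

namespace TreeAux




variable {V : Type*} {G : SimpleGraph V}

lemma path_length_eq_dist (hT : G.IsTree) {a b : V} (p : G.Walk a b) (hp : p.IsPath) :
    p.length = G.dist a b := by
  obtain ⟨q, hq, hlen⟩ := (hT.isConnected a b).exists_path_of_dist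
  rw [(hT.existsUnique_path a b).unique hp hq, hlen]

lemma dist_split (hT : G.IsTree) {a b : V} (p : G.Walk a b) (hp : p.IsPath) {y : V}
    (hy : y ∈ p.support) : G.dist a y + G.dist y b = G.dist a b := by
  classical
  rw [← path_length_eq_dist hT _ (hp.takeUntil hy), ← path_length_eq_dist hT _ (hp.dropUntil hy),
    ← Walk.length_append, Walk.take_spec p hy, path_length_eq_dist hT p hp]

lemma step_exists (hT : G.IsTree) {v z : V} (hvz : v ≠ z) :
    ∃ u, G.Adj v u ∧ G.dist u z + 1 = G.dist v z := by
  obtain ⟨p, hp, hlen⟩ := (hT.isConnected v z).exists_path_of_dist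
  cases p with
  | nil => exact absurd rfl hvz
  | cons h q =>
    refine ⟨_, h, ?_⟩
    rw [← path_length_eq_dist hT q ((Walk.cons_isPath_iff _ _).mp hp).1, ← hlen]
    rfl

lemma step_unique (hT : G.IsTree) {v z u u' : V} (h1 : G.Adj v u) (h2 : G.dist u z + 1 = G.dist v z)
    (h3 : G.Adj v u') (h4 : G.dist u' z + 1 = G.dist v z) : u = u' := by
  obtain ⟨p, hp, hplen⟩ := (hT.isConnected u z).exists_path_of_dist
  obtain ⟨q, hq, hqlen⟩ := (hT.isConnected u' z).exists_path_of_dist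
  have hP : (Walk.cons h1 p).IsPath :=
    Walk.isPath_of_length_eq_dist _ (by rw [Walk.length_cons, hplen, h2])
  have hQ : (Walk.cons h3 q).IsPath :=
    Walk.isPath_of_length_eq_dist _ (by rw [Walk.length_cons, hqlen, h4])
  have heq := (hT.existsUnique_path v z).unique hP hQ
  have := congrArg (fun w => w.getVert 1) heq
  simpa using this

lemma adj_dist (hT : G.IsTree) {v z u : V} (hvz : v ≠ z) (h : G.Adj v u) :
    G.dist u z + 1 = G.dist v z ∨ G.dist u z = G.dist v z + 1 := by
  classical
  obtain ⟨p, hp, hlen⟩ := (hT.isConnected v z).exists_path_of_dist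
  by_cases hu : u ∈ p.support
  · left
    have hsplit := dist_split hT p hp hu
    have h1 : G.dist v u = 1 := dist_eq_one_iff_adj.mpr h
    omega
  · right
    have hP : (Walk.cons h.symm p).IsPath := (Walk.cons_isPath_iff _ _).mpr ⟨hp, hu⟩
    have hl := path_length_eq_dist hT _ hP
    rw [Walk.length_cons, hlen] at hl
    omega

lemma dist_add_of_step_ne (hT : G.IsTree) {z z' : V} :
    ∀ (n : ℕ) (v u u' : V), G.dist u z = n → v ≠ z' → G.Adj v u →
      G.dist u z + 1 = G.dist v z →
      G.Adj v u' → G.dist u' z' + 1 = G.dist v z' → u ≠ u' →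
      G.dist z z' = G.dist v z + G.dist v z' := by
  intro n
  induction n using Nat.strong_induction_on with
  | _ n IH =>
    intro v u u' hn hvz' h1 h2 h3 h4 hne
    have huz' : G.dist u z' = G.dist v z' + 1 := by
      rcases adj_dist hT hvz' h1 with hL | hR
      · exact absurd (step_unique hT h1 hL h3 h4) hne
      · exact hR
    rcases Nat.eq_zero_or_pos n with h0 | hpos
    · have huz : u = z := hT.isConnected.dist_eq_zero_iff.mp (by omega)
      subst huz
      omega
    · have huz : u ≠ z := fun e => by rw [e, dist_self] at hn; omega
      obtain ⟨x, hx1, hx2⟩ := step_exists hT huz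
      have hune : u ≠ z' := fun e => by rw [e, dist_self] at huz'; omega
      have hxv : x ≠ v := fun e => by rw [e] at hx2; omega
      have := IH (n - 1) (by omega) u x v (by omega) hune hx1 hx2 h1.symm (by omega) hxv
      omega



section Ecc

variable [Fintype V]

lemma exists_ecc (G : SimpleGraph V) (v : V) : ∃ z, G.dist v z = ecc G v := by
  have h : (Set.range (G.dist v)).Nonempty := ⟨G.dist v v, v, rfl⟩
  exact Nat.sSup_mem h (Set.finite_range _).bddAbove

lemma dist_le_ecc (G : SimpleGraph V) (v z : V) : G.dist v z ≤ ecc G v :=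
  le_csSup (Set.finite_range _).bddAbove ⟨z, rfl⟩

lemma ecc_le_diam (G : SimpleGraph V) (v : V) : ecc G v ≤ sSup (Set.range (ecc G)) :=
  le_csSup (Set.finite_range _).bddAbove ⟨v, rfl⟩

lemma exists_diam (G : SimpleGraph V) [Nonempty V] :
    ∃ v, ecc G v = sSup (Set.range (ecc G)) :=
  Nat.sSup_mem (Set.range_nonempty _) (Set.finite_range _).bddAbove

lemma diam_le_two_ecc (hT : G.IsTree) (v : V) :
    sSup (Set.range (ecc G)) ≤ 2 * ecc G v := by
  have hne : Nonempty V := hT.isConnected.nonempty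
  obtain ⟨a, ha⟩ := exists_diam G
  obtain ⟨b, hb⟩ := exists_ecc G a
  calc sSup (Set.range (ecc G)) = G.dist a b := by rw [hb, ha]
    _ ≤ G.dist a v + G.dist v b := hT.isConnected.dist_triangle
    _ = G.dist v a + G.dist v b := by rw [dist_comm]
    _ ≤ ecc G v + ecc G v := add_le_add (dist_le_ecc G v a) (dist_le_ecc G v b)
    _ = 2 * ecc G v := by ring

lemma ecc_adj_le (hT : G.IsTree) {u v : V} (h : G.Adj u v) : ecc G u ≤ ecc G v + 1 := by
  have hne' : (Set.range (G.dist u)).Nonempty := ⟨G.dist u u, u, rfl⟩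
  apply csSup_le hne'
  rintro a ⟨z, rfl⟩
  calc G.dist u z ≤ G.dist u v + G.dist v z := hT.isConnected.dist_triangle
    _ = 1 + G.dist v z := by rw [dist_eq_one_iff_adj.mpr h]
    _ ≤ 1 + ecc G v := by have := dist_le_ecc G v z; omega
    _ = ecc G v + 1 := by ring

/-- Step towards an eccentric vertex from a neighbor of not-larger eccentricity. -/
lemma adj_ecc_step (hT : G.IsTree) {u₁ u₂ : V} (h : G.Adj u₁ u₂) (he : ecc G u₂ ≤ ecc G u₁)
    {z : V} (hz : G.dist u₁ z = ecc G u₁) : G.dist u₂ z + 1 = G.dist u₁ z := by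
  have h1 : (1 : ℕ) ≤ ecc G u₁ := by
    have := dist_le_ecc G u₁ u₂
    rw [dist_eq_one_iff_adj.mpr h] at this; omega
  have hne : u₁ ≠ z := by
    intro e; subst e; rw [dist_self] at hz; omega
  rcases adj_dist hT hne h with hL | hR
  · exact hL
  · exfalso
    have := dist_le_ecc G u₂ z
    omega

/-- Two neighbors of `u₁` of eccentricity at most `ecc u₁` coincide. -/
lemma partner_unique (hT : G.IsTree) {u₁ u₂ u₂' : V} (h : G.Adj u₁ u₂) (h' : G.Adj u₁ u₂')
    (he : ecc G u₂ ≤ ecc G u₁) (he' : ecc G u₂' ≤ ecc G u₁) : u₂ = u₂' := by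
  obtain ⟨z, hz⟩ := exists_ecc G u₁
  exact step_unique hT h (adj_ecc_step hT h he hz) h' (adj_ecc_step hT h' he' hz)

lemma eq_adj_bound (hT : G.IsTree) {u₁ u₂ : V} (h : G.Adj u₁ u₂)
    (he : ecc G u₁ = ecc G u₂) (h2 : 2 ≤ ecc G u₁) :
    2 * ecc G u₁ ≤ sSup (Set.range (ecc G)) + 1 := by
  obtain ⟨z, hz⟩ := exists_ecc G u₁
  obtain ⟨z', hz'⟩ := exists_ecc G u₂
  have s1 : G.dist u₂ z + 1 = G.dist u₁ z := adj_ecc_step hT h he.ge hz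
  have s2 : G.dist u₁ z' + 1 = G.dist u₂ z' := adj_ecc_step hT h.symm he.le hz'
  have hu₂z : u₂ ≠ z := by intro e; subst e; rw [dist_self] at s1; omega
  have hu₂z' : u₂ ≠ z' := by intro e; subst e; rw [dist_self] at hz'; omega
  obtain ⟨x, hx1, hx2⟩ := step_exists hT hu₂z
  have hxu : x ≠ u₁ := by
    intro e; subst e; omega
  have hd := dist_add_of_step_ne hT (G.dist x z) u₂ x u₁ rfl hu₂z' hx1 hx2 h.symm s2 hxu
  have hzz : G.dist z z' ≤ sSup (Set.range (ecc G)) :=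
    le_trans (dist_le_ecc G z z') (ecc_le_diam G z)
  omega


lemma parent_spec (hT : G.IsTree) {v : V} (hv : sSup (Set.range (ecc G)) + 2 ≤ 2 * ecc G v) :
    ∃ p, G.Adj v p ∧ ecc G p + 1 = ecc G v ∧
      ∀ u, G.Adj v u → u ≠ p → ecc G u = ecc G v + 1 := by
  have hvD : ecc G v ≤ sSup (Set.range (ecc G)) := ecc_le_diam G v
  have hv2 : 2 ≤ ecc G v := by omega
  obtain ⟨z, hz⟩ := exists_ecc G v
  have hvz : v ≠ z := by intro e; subst e; rw [dist_self] at hz; omega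
  obtain ⟨p, hp1, hp2⟩ := step_exists hT hvz
  have hothers : ∀ u, G.Adj v u → u ≠ p → ecc G u = ecc G v + 1 := by
    intro u hu hup
    rcases adj_dist hT hvz hu with hL | hR
    · exact absurd (step_unique hT hu hL hp1 hp2) hup
    · have h1 : ecc G u ≤ ecc G v + 1 := ecc_adj_le hT hu.symm
      have h2 : G.dist u z ≤ ecc G u := dist_le_ecc G u z
      omega
  refine ⟨p, hp1, ?_, hothers⟩
  have hple : ecc G v ≤ ecc G p + 1 := ecc_adj_le hT hp1
  by_contra hcon
  have hge : ecc G v ≤ ecc G p := by omega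
  obtain ⟨z', hz'⟩ := exists_ecc G p
  have hpz' : p ≠ z' := by intro e; subst e; rw [dist_self] at hz'; omega
  have hpz : p ≠ z := by intro e; subst e; rw [dist_self] at hp2; omega
  have hvstep : G.dist v z' + 1 = G.dist p z' := by
    rcases adj_dist hT hpz' hp1.symm with hL | hR
    · exact hL
    · exfalso
      have := dist_le_ecc G v z'
      omega
  obtain ⟨x, hx1, hx2⟩ := step_exists hT hpz
  have hxv : x ≠ v := by intro e; subst e; omega
  have hd := dist_add_of_step_ne hT (G.dist x z) p x v rfl hpz' hx1 hx2 hp1.symm hvstep hxv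
  have hzz : G.dist z z' ≤ sSup (Set.range (ecc G)) :=
    le_trans (dist_le_ecc G z z') (ecc_le_diam G z)
  omega

lemma swap_iso (G : SimpleGraph V) (k : ℕ) (x y : ℕ → V)
    (hxy : ∀ i j, i ≤ k → j ≤ k → x i ≠ y j)
    (hxinj : ∀ i j, i ≤ k → j ≤ k → x i = x j → i = j)
    (hyinj : ∀ i j, i ≤ k → j ≤ k → y i = y j → i = j)
    (hxa : ∀ i, i < k → G.Adj (x i) (x (i + 1)))
    (hya : ∀ i, i < k → G.Adj (y i) (y (i + 1)))
    (hchx : ∀ i j, i ≤ k → j ≤ k → G.Adj (x i) (x j) → j = i + 1 ∨ i = j + 1)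
    (hchy : ∀ i j, i ≤ k → j ≤ k → G.Adj (y i) (y j) → j = i + 1 ∨ i = j + 1)
    (hcross : ∀ i j, i ≤ k → j ≤ k → G.Adj (x i) (y j) → G.Adj (y i) (x j))
    (houtx : ∀ i u, i ≤ k → G.Adj (x i) u → (∀ j, j ≤ k → u ≠ x j ∧ u ≠ y j) → G.Adj (y i) u)
    (houty : ∀ i u, i ≤ k → G.Adj (y i) u → (∀ j, j ≤ k → u ≠ x j ∧ u ≠ y j) → G.Adj (x i) u) :
    ∃ φ : G ≃g G, ∃ v : V, φ v ≠ v := by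
  classical
  set f : V → V := fun v =>
    if h : ∃ i, i ≤ k ∧ v = x i then y h.choose
    else if h' : ∃ i, i ≤ k ∧ v = y i then x h'.choose
    else v with hf
  have hfx : ∀ i, i ≤ k → f (x i) = y i := by
    intro i hi
    have hex : ∃ j, j ≤ k ∧ x i = x j := ⟨i, hi, rfl⟩
    have he : hex.choose = i := hxinj _ _ hex.choose_spec.1 hi hex.choose_spec.2.symm
    simp only [hf, dif_pos hex, he]
  have hfy : ∀ i, i ≤ k → f (y i) = x i := by
    intro i hi
    have hnex : ¬ ∃ j, j ≤ k ∧ y i = x j := by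
      rintro ⟨j, hj, he⟩; exact hxy j i hj hi he.symm
    have hex : ∃ j, j ≤ k ∧ y i = y j := ⟨i, hi, rfl⟩
    have he : hex.choose = i := hyinj _ _ hex.choose_spec.1 hi hex.choose_spec.2.symm
    simp only [hf, dif_neg hnex, dif_pos hex, he]
  have hfo : ∀ v, (∀ j, j ≤ k → v ≠ x j ∧ v ≠ y j) → f v = v := by
    intro v hv
    have h1 : ¬ ∃ j, j ≤ k ∧ v = x j := by rintro ⟨j, hj, he⟩; exact (hv j hj).1 he
    have h2 : ¬ ∃ j, j ≤ k ∧ v = y j := by rintro ⟨j, hj, he⟩; exact (hv j hj).2 he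
    simp only [hf, dif_neg h1, dif_neg h2]
  have htri : ∀ v : V, (∃ i, i ≤ k ∧ v = x i) ∨ (∃ i, i ≤ k ∧ v = y i) ∨
      (∀ j, j ≤ k → v ≠ x j ∧ v ≠ y j) := by
    intro v
    by_cases h1 : ∃ i, i ≤ k ∧ v = x i
    · exact Or.inl h1
    by_cases h2 : ∃ i, i ≤ k ∧ v = y i
    · exact Or.inr (Or.inl h2)
    refine Or.inr (Or.inr ?_)
    intro j hj
    exact ⟨fun he => h1 ⟨j, hj, he⟩, fun he => h2 ⟨j, hj, he⟩⟩
  have hinv : Function.Involutive f := by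
    intro v
    rcases htri v with ⟨i, hi, rfl⟩ | ⟨i, hi, rfl⟩ | hv
    · rw [hfx i hi, hfy i hi]
    · rw [hfy i hi, hfx i hi]
    · rw [hfo v hv, hfo v hv]
  have hmono : ∀ a b, G.Adj a b → G.Adj (f a) (f b) := by
    intro a b hab
    rcases htri a with ⟨i, hi, rfl⟩ | ⟨i, hi, rfl⟩ | ha
    · rcases htri b with ⟨j, hj, rfl⟩ | ⟨j, hj, rfl⟩ | hb
      · rw [hfx i hi, hfx j hj]
        rcases hchx i j hi hj hab with rfl | rfl
        · exact hya i (by omega)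
        · exact (hya j (by omega)).symm
      · rw [hfx i hi, hfy j hj]
        exact hcross i j hi hj hab
      · rw [hfx i hi, hfo b hb]
        exact houtx i b hi hab hb
    · rcases htri b with ⟨j, hj, rfl⟩ | ⟨j, hj, rfl⟩ | hb
      · rw [hfy i hi, hfx j hj]
        exact (hcross j i hj hi hab.symm).symm
      · rw [hfy i hi, hfy j hj]
        rcases hchy i j hi hj hab with rfl | rfl
        · exact hxa i (by omega)
        · exact (hxa j (by omega)).symm
      · rw [hfy i hi, hfo b hb]
        exact houty i b hi hab hb
    · rcases htri b with ⟨j, hj, rfl⟩ | ⟨j, hj, rfl⟩ | hb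
      · rw [hfo a ha, hfx j hj]
        exact (houtx j a hj hab.symm ha).symm
      · rw [hfo a ha, hfy j hj]
        exact (houty j a hj hab.symm ha).symm
      · rw [hfo a ha, hfo b hb]
        exact hab
  refine ⟨⟨hinv.toPerm f, @fun a b => ?_⟩, x 0, ?_⟩
  · simp only [Function.Involutive.coe_toPerm]
    constructor
    · intro h
      have h2 := hmono _ _ h
      rwa [hinv a, hinv b] at h2
    · exact hmono a b
  · show (hinv.toPerm f) (x 0) ≠ x 0
    simp only [Function.Involutive.coe_toPerm]
    rw [hfx 0 (Nat.zero_le k)]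
    exact fun he => hxy 0 0 (Nat.zero_le k) (Nat.zero_le k) he.symm


lemma half (hT : G.IsTree) {t k : ℕ} {x y : ℕ → V} {b : V}
    (hxe : ∀ i, i ≤ k → ecc G (x i) = t + i)
    (hye : ∀ i, i ≤ k → ecc G (y i) = t + i)
    (hxyne : ∀ i, i ≤ k → x i ≠ y i)
    (hxa : ∀ i, i < k → G.Adj (x i) (x (i + 1)))
    (hecc_le : ∀ v, ecc G v ≤ t + k)
    (hN1 : ∀ v u u', t ≤ ecc G v → G.Adj v u → G.Adj v u' →
      ecc G u = ecc G v + 1 → ecc G u' = ecc G v + 1 → u = u')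
    (hN3 : ∀ v u, t < ecc G v → G.Adj v u → ecc G u ≠ ecc G v)
    (hN4 : ∀ v u u', t < ecc G v → G.Adj v u → G.Adj v u' →
      ecc G u + 1 = ecc G v → ecc G u' + 1 = ecc G v → u = u')
    (hbx : ∀ u, G.Adj (x 0) u → ecc G u = t + 1 ∨ u = b)
    (hb : b = y 0 ∨ (G.Adj b (y 0) ∧ ∀ j, j ≤ k → b ≠ x j ∧ b ≠ y j)) :
    (∀ i j, i ≤ k → j ≤ k → G.Adj (x i) (x j) → j = i + 1 ∨ i = j + 1) ∧
    (∀ i j, i ≤ k → j ≤ k → G.Adj (x i) (y j) → G.Adj (y i) (x j)) ∧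
    (∀ i u, i ≤ k → G.Adj (x i) u → (∀ j, j ≤ k → u ≠ x j ∧ u ≠ y j) → G.Adj (y i) u) := by
  have hxy : ∀ i j, i ≤ k → j ≤ k → x i ≠ y j := by
    intro i j hi hj he
    rcases eq_or_ne i j with rfl | hne
    · exact hxyne i hi he
    · have h1 := hxe i hi
      have h2 := hye j hj
      rw [he] at h1
      omega
  refine ⟨?_, ?_, ?_⟩
  · intro i j hi hj hadj
    have l1 : ecc G (x j) ≤ ecc G (x i) + 1 := ecc_adj_le hT hadj.symm
    have l2 : ecc G (x i) ≤ ecc G (x j) + 1 := ecc_adj_le hT hadj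
    have e1 := hxe i hi
    have e2 := hxe j hj
    have hne : i ≠ j := by rintro rfl; exact hadj.ne rfl
    omega
  · intro i j hi hj hadj
    have e1 := hxe i hi
    have e2 := hye j hj
    have l1 : ecc G (y j) ≤ ecc G (x i) + 1 := ecc_adj_le hT hadj.symm
    have l2 : ecc G (x i) ≤ ecc G (y j) + 1 := ecc_adj_le hT hadj
    rcases Nat.lt_trichotomy j i with hlt | heqij | hgt
    · exfalso
      have hij : i = j + 1 := by omega
      subst hij
      have heq := hN4 (x (j+1)) (y j) (x j) (by omega) hadj ((hxa j (by omega)).symm)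
        (by omega) (by have := hxe j (by omega); omega)
      exact hxy j j (by omega) (by omega) heq.symm
    · subst heqij
      rcases Nat.eq_zero_or_pos j with rfl | hpos
      · exact hadj.symm
      · exact absurd (by omega : ecc G (y j) = ecc G (x j)) (hN3 (x j) (y j) (by omega) hadj)
    · exfalso
      have hij : j = i + 1 := by omega
      subst hij
      have heq := hN1 (x i) (y (i+1)) (x (i+1)) (by omega) hadj (hxa i (by omega))
        (by omega) (by have := hxe (i+1) hj; omega)
      exact hxy (i+1) (i+1) hj hj heq.symm
  · intro i u hi hadj hout
    rcases Nat.eq_zero_or_pos i with rfl | hpos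
    · rcases hbx u hadj with hu | rfl
      · exfalso
        have e0 := hxe 0 (by omega)
        have hk : 1 ≤ k := by have := hecc_le u; omega
        have heq := hN1 (x 0) u (x 1) (by omega) hadj (hxa 0 (by omega)) (by omega)
          (by have := hxe 1 hk; omega)
        exact (hout 1 hk).1 heq
      · rcases hb with rfl | ⟨hb1, hb2⟩
        · exact absurd rfl (hout 0 (by omega)).2
        · exact hb1.symm
    · obtain ⟨i', rfl⟩ : ∃ i', i = i' + 1 := ⟨i - 1, by omega⟩
      exfalso
      have e1 := hxe (i'+1) hi
      have l1 : ecc G u ≤ ecc G (x (i'+1)) + 1 := ecc_adj_le hT hadj.symm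
      have l2 : ecc G (x (i'+1)) ≤ ecc G u + 1 := ecc_adj_le hT hadj
      rcases Nat.lt_trichotomy (ecc G u) (ecc G (x (i'+1))) with hlt | heq | hgt
      · have heq := hN4 (x (i'+1)) u (x i') (by omega) hadj (hxa i' (by omega)).symm
          (by omega) (by have := hxe i' (by omega); omega)
        exact (hout i' (by omega)).1 heq
      · exact hN3 (x (i'+1)) u (by omega) hadj heq
      · have hk : i' + 1 < k := by have := hecc_le u; omega
        have heq := hN1 (x (i'+1)) u (x (i'+2)) (by omega) hadj (hxa (i'+1) hk)
          (by omega) (by have := hxe (i'+2) (by omega); omega)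
        exact (hout (i'+2) (by omega)).1 heq

end Ecc

end TreeAux

open TreeAux

theorem not_asymmetric_of_eventually_constant
    {V : Type*} [Fintype V] (G : SimpleGraph V) (hT : G.IsTree) (s : ℕ)
    (h1 : {v : V | ecc G v = s}.ncard < {v : V | ecc G v = s + 1}.ncard)
    (h2 : ∀ j : ℕ, s < j → j ≤ sSup (Set.range (ecc G)) →
      {v : V | ecc G v = j}.ncard
        = {v : V | ecc G v = sSup (Set.range (ecc G))}.ncard) :
    ∃ φ : G ≃g G, ∃ v : V, φ v ≠ v := by
  classical
  have hne : Nonempty V := hT.isConnected.nonempty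
  set D := sSup (Set.range (ecc G)) with hDdef
  have hDle : ∀ v : V, ecc G v ≤ D := fun v => by rw [hDdef]; exact ecc_le_diam G v
  have hD2e : ∀ v : V, D ≤ 2 * ecc G v := fun v => by rw [hDdef]; exact diam_le_two_ecc hT v
  have hDex : ∃ v : V, ecc G v = D := by rw [hDdef]; exact exists_diam G
  have hEq : ∀ {a b : V}, G.Adj a b → ecc G a = ecc G b → 2 ≤ ecc G a →
      2 * ecc G a ≤ D + 1 := by
    intro a b h he h2e
    rw [hDdef]
    exact eq_adj_bound hT h he h2e
  set L : ℕ → Finset V := fun i => Finset.univ.filter (fun v => ecc G v = i) with hLdef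
  have hLmem : ∀ i (v : V), v ∈ L i ↔ ecc G v = i := by
    intro i v; simp only [hLdef, Finset.mem_filter, Finset.mem_univ, true_and]
  have hLcard : ∀ i, {v : V | ecc G v = i}.ncard = (L i).card := by
    intro i
    have hh : {v : V | ecc G v = i} = ↑(L i) := by
      ext v; rw [Set.mem_setOf_eq, Finset.mem_coe, hLmem]
    rw [hh, Set.ncard_coe_finset]
  rw [hLcard, hLcard] at h1
  have h2' : ∀ j, s < j → j ≤ D → (L j).card = (L D).card := by
    intro j hj hjD
    have hgot := h2 j hj hjD
    rwa [hLcard, hLcard] at hgot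
  obtain ⟨v₀, hv₀⟩ : ∃ v : V, ecc G v = s + 1 := by
    have hpos : 0 < (L (s+1)).card := by omega
    obtain ⟨v, hv⟩ := Finset.card_pos.mp hpos
    exact ⟨v, (hLmem _ v).mp hv⟩
  have hsD : s + 1 ≤ D := by rw [← hv₀]; exact hDle v₀
  have hKEY : D ≤ 2 * s + 2 := by have := hD2e v₀; omega
  -- the parent (choice) function
  set pa : V → V := fun v =>
    if h : ∃ p, G.Adj v p ∧ ecc G p + 1 = ecc G v ∧
        ∀ u, G.Adj v u → u ≠ p → ecc G u = ecc G v + 1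
    then h.choose else v with hpadef
  have hpa : ∀ v : V, D + 2 ≤ 2 * ecc G v → G.Adj v (pa v) ∧ ecc G (pa v) + 1 = ecc G v ∧
      ∀ u, G.Adj v u → u ≠ pa v → ecc G u = ecc G v + 1 := by
    intro v hv
    have hex : ∃ p, G.Adj v p ∧ ecc G p + 1 = ecc G v ∧
        ∀ u, G.Adj v u → u ≠ p → ecc G u = ecc G v + 1 := by
      rw [hDdef] at hv; exact parent_spec hT hv
    simp only [hpadef]
    rw [dif_pos hex]
    exact hex.choose_spec
  -- the set of "bad" levels
  set S : Set ℕ := {i | (s + 1 ≤ i ∧ i ≤ D) ∧ ∃ a b : V, a ≠ b ∧ ecc G a = i ∧ ecc G b = i ∧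
      ((∃ w, G.Adj w a ∧ G.Adj w b ∧ ecc G w + 1 = i) ∨ G.Adj a b)} with hSdef
  have hSmem : ∀ i, i ∈ S ↔ (s + 1 ≤ i ∧ i ≤ D) ∧ ∃ a b : V, a ≠ b ∧ ecc G a = i ∧
      ecc G b = i ∧ ((∃ w, G.Adj w a ∧ G.Adj w b ∧ ecc G w + 1 = i) ∨ G.Adj a b) := by
    intro i; rw [hSdef]; exact Iff.rfl
  by_cases hB : S.Nonempty
  case pos =>
    have hSbdd : BddAbove S := ⟨D, fun j hj => ((hSmem j).mp hj).1.2⟩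
    have htmem := Nat.sSup_mem hB hSbdd
    set t := sSup S with htdef
    obtain ⟨⟨ht1, ht2⟩, u₁, u₂, hu12, he1, he2, hshape⟩ := (hSmem t).mp htmem
    have hmax : ∀ j, t < j → j ≤ D → ∀ a b : V, a ≠ b → ecc G a = j → ecc G b = j →
        ¬((∃ w, G.Adj w a ∧ G.Adj w b ∧ ecc G w + 1 = j) ∨ G.Adj a b) := by
      intro j hjt hjD a b hab ha hb hcon
      have hj : j ∈ S := (hSmem j).mpr ⟨⟨by omega, hjD⟩, a, b, hab, ha, hb, hcon⟩
      have := le_csSup hSbdd hj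
      omega
    have hlow : D ≤ 2 * t := by omega
    have hN1 : ∀ v u u' : V, t ≤ ecc G v → G.Adj v u → G.Adj v u' →
        ecc G u = ecc G v + 1 → ecc G u' = ecc G v + 1 → u = u' := by
      intro v u u' hv hu hu' heu heu'
      by_contra hne'
      have huD := hDle u
      exact hmax (ecc G v + 1) (by omega) (by omega) u u' hne' heu heu'
        (Or.inl ⟨v, hu, hu', by omega⟩)
    have hN3 : ∀ v u : V, t < ecc G v → G.Adj v u → ecc G u ≠ ecc G v := by
      intro v u hv hu he
      have h2e : 2 ≤ ecc G v := by omega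
      have := hEq hu he.symm h2e
      omega
    have hN4 : ∀ v u u' : V, t < ecc G v → G.Adj v u → G.Adj v u' →
        ecc G u + 1 = ecc G v → ecc G u' + 1 = ecc G v → u = u' := by
      intro v u u' hv hu hu' heu heu'
      obtain ⟨hpad, hpe, hpu⟩ := hpa v (by omega)
      have hq1 : u = pa v := by by_contra hne'; have := hpu u hu hne'; omega
      have hq2 : u' = pa v := by by_contra hne'; have := hpu u' hu' hne'; omega
      rw [hq1, hq2]
    have hN2 : ∀ v : V, t ≤ ecc G v → ecc G v < D → ∃ u, G.Adj v u ∧ ecc G u = ecc G v + 1 := by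
      intro v hv hvD
      have hcard : (L (ecc G v)).card ≤ (L (ecc G v + 1)).card := by
        rw [h2' (ecc G v) (by omega) (by omega), h2' (ecc G v + 1) (by omega) (by omega)]
      obtain ⟨a, ha, hav⟩ := Finset.surj_on_of_inj_on_of_card_le
        (fun (a : V) (_ : a ∈ L (ecc G v + 1)) => pa a)
        (by
          intro a ha
          show pa a ∈ L (ecc G v)
          have hea : ecc G a = ecc G v + 1 := (hLmem _ _).mp ha
          obtain ⟨-, hpe, -⟩ := hpa a (by omega)
          exact (hLmem _ _).mpr (by omega))
        (by
          intro a₁ a₂ h₁ h₂ heq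
          have heq' : pa a₁ = pa a₂ := heq
          by_contra hne'
          have he₁ : ecc G a₁ = ecc G v + 1 := (hLmem _ _).mp h₁
          have he₂ : ecc G a₂ = ecc G v + 1 := (hLmem _ _).mp h₂
          obtain ⟨hq1, hq2, -⟩ := hpa a₁ (by omega)
          obtain ⟨hq1', hq2', -⟩ := hpa a₂ (by omega)
          refine hmax (ecc G v + 1) (by omega) (by omega) a₁ a₂ hne' he₁ he₂
            (Or.inl ⟨pa a₁, hq1.symm, ?_, by omega⟩)
          rw [heq']; exact hq1'.symm)
        hcard v ((hLmem _ _).mpr rfl)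
      have hav' : v = pa a := hav
      have hea : ecc G a = ecc G v + 1 := (hLmem _ _).mp ha
      obtain ⟨hq1, -, -⟩ := hpa a (by omega)
      refine ⟨a, ?_, hea⟩
      rw [hav']
      exact hq1.symm
    -- the child (choice) function and the two chains
    set c : V → V := fun v =>
      if h : ∃ u, G.Adj v u ∧ ecc G u = ecc G v + 1 then h.choose else v with hcdef
    have hcspec : ∀ v : V, t ≤ ecc G v → ecc G v < D →
        G.Adj v (c v) ∧ ecc G (c v) = ecc G v + 1 := by
      intro v hv hvD
      have hex := hN2 v hv hvD
      simp only [hcdef]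
      rw [dif_pos hex]
      exact hex.choose_spec
    set k := D - t with hkdef
    have htk : t + k = D := by omega
    set x : ℕ → V := fun i => c^[i] u₁ with hxdef
    set y : ℕ → V := fun i => c^[i] u₂ with hydef
    have hx0 : x 0 = u₁ := by rw [hxdef]; rfl
    have hy0 : y 0 = u₂ := by rw [hydef]; rfl
    have hxs : ∀ n, x (n + 1) = c (x n) := by
      intro n; rw [hxdef]; exact Function.iterate_succ_apply' c n u₁
    have hys : ∀ n, y (n + 1) = c (y n) := by
      intro n; rw [hydef]; exact Function.iterate_succ_apply' c n u₂
    have hxe : ∀ i, i ≤ k → ecc G (x i) = t + i := by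
      intro i
      induction i with
      | zero => intro _; rw [hx0, he1]; rfl
      | succ n ih =>
        intro hn
        have hxn := ih (by omega)
        have hstep := hcspec (x n) (by omega) (by omega)
        rw [hxs n, hstep.2, hxn]; rfl
    have hye : ∀ i, i ≤ k → ecc G (y i) = t + i := by
      intro i
      induction i with
      | zero => intro _; rw [hy0, he2]; rfl
      | succ n ih =>
        intro hn
        have hyn := ih (by omega)
        have hstep := hcspec (y n) (by omega) (by omega)
        rw [hys n, hstep.2, hyn]; rfl
    have hxa : ∀ i, i < k → G.Adj (x i) (x (i + 1)) := by
      intro i hi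
      have hxi := hxe i (by omega)
      have hstep := hcspec (x i) (by omega) (by omega)
      rw [hxs i]
      exact hstep.1
    have hya : ∀ i, i < k → G.Adj (y i) (y (i + 1)) := by
      intro i hi
      have hyi := hye i (by omega)
      have hstep := hcspec (y i) (by omega) (by omega)
      rw [hys i]
      exact hstep.1
    have hxyne : ∀ i, i ≤ k → x i ≠ y i := by
      intro i
      induction i with
      | zero => intro _ he; rw [hx0, hy0] at he; exact hu12 he
      | succ n ih =>
        intro hn he
        have hxn1 := hxe (n+1) hn
        have hyadj : G.Adj (x (n+1)) (y n) := by
          have h' := hya n (by omega)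
          rw [← he] at h'
          exact h'.symm
        have hxadj : G.Adj (x (n+1)) (x n) := (hxa n (by omega)).symm
        have heq := hN4 (x (n+1)) (y n) (x n) (by omega) hyadj hxadj
          (by have := hye n (by omega); omega) (by have := hxe n (by omega); omega)
        exact ih (by omega) heq.symm
    have hecc_le : ∀ v : V, ecc G v ≤ t + k := by
      intro v; have := hDle v; omega
    have hxinj : ∀ i j, i ≤ k → j ≤ k → x i = x j → i = j := by
      intro i j hi hj he
      have e1 := hxe i hi
      have e2 := hxe j hj
      rw [he] at e1; omega
    have hyinj : ∀ i j, i ≤ k → j ≤ k → y i = y j → i = j := by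
      intro i j hi hj he
      have e1 := hye i hi
      have e2 := hye j hj
      rw [he] at e1; omega
    have hxyfull : ∀ i j, i ≤ k → j ≤ k → x i ≠ y j := by
      intro i j hi hj he
      rcases eq_or_ne i j with rfl | hne'
      · exact hxyne i hi he
      · have e1 := hxe i hi
        have e2 := hye j hj
        rw [he] at e1; omega
    rcases hshape with ⟨w, hw1, hw2, hw3⟩ | hadj
    · -- two chains hanging from a common vertex w
      have hw2t : D + 2 ≤ 2 * t := by have := hD2e w; omega
      have hbx : ∀ u, G.Adj (x 0) u → ecc G u = t + 1 ∨ u = w := by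
        intro u hu
        rw [hx0] at hu
        obtain ⟨hpad, hpe, hpu⟩ := hpa u₁ (by omega)
        have hwp : w = pa u₁ := by
          by_contra hne'
          have := hpu w hw1.symm hne'
          omega
        rcases eq_or_ne u (pa u₁) with rfl | hne'
        · right; exact hwp.symm
        · left; have := hpu u hu hne'; omega
      have hby : ∀ u, G.Adj (y 0) u → ecc G u = t + 1 ∨ u = w := by
        intro u hu
        rw [hy0] at hu
        obtain ⟨hpad, hpe, hpu⟩ := hpa u₂ (by omega)
        have hwp : w = pa u₂ := by
          by_contra hne'
          have := hpu w hw2.symm hne'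
          omega
        rcases eq_or_ne u (pa u₂) with rfl | hne'
        · right; exact hwp.symm
        · left; have := hpu u hu hne'; omega
      have hwout : ∀ j, j ≤ k → w ≠ x j ∧ w ≠ y j := by
        intro j hj
        constructor
        · intro he'
          have := hxe j hj
          rw [← he'] at this
          omega
        · intro he'
          have := hye j hj
          rw [← he'] at this
          omega
      obtain ⟨hchx, hcross, houtx⟩ := half hT hxe hye hxyne hxa hecc_le hN1 hN3 hN4 hbx
        (Or.inr ⟨by rw [hy0]; exact hw2, hwout⟩)
      obtain ⟨hchy, -, houty⟩ := half hT hye hxe (fun i hi he => (hxyne i hi) he.symm) hya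
        hecc_le hN1 hN3 hN4 hby
        (Or.inr ⟨by rw [hx0]; exact hw1, fun j hj => ⟨(hwout j hj).2, (hwout j hj).1⟩⟩)
      exact swap_iso G k x y hxyfull hxinj hyinj hxa hya hchx hchy hcross houtx
        (fun i u hi hadj' hout => houty i u hi hadj' (fun j hj => ⟨(hout j hj).2, (hout j hj).1⟩))
    · -- two chains hanging from adjacent bottoms
      have hlbB : ∀ v : V, t ≤ ecc G v := by
        have hDl : 2 * t ≤ D + 1 := by
          rcases Nat.lt_or_ge t 2 with hlt | hge
          · omega
          · have := hEq hadj (by omega : ecc G u₁ = ecc G u₂) (by omega)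
            omega
        intro v; have := hD2e v; omega
      have hbx : ∀ u, G.Adj (x 0) u → ecc G u = t + 1 ∨ u = u₂ := by
        intro u hu
        rw [hx0] at hu
        have hle : ecc G u ≤ t + 1 := by have := ecc_adj_le hT hu.symm; omega
        have hge := hlbB u
        rcases eq_or_ne (ecc G u) (t + 1) with he | hne'
        · exact Or.inl he
        · exact Or.inr (partner_unique hT hu hadj (by omega) (by omega))
      have hby : ∀ u, G.Adj (y 0) u → ecc G u = t + 1 ∨ u = u₁ := by
        intro u hu
        rw [hy0] at hu
        have hle : ecc G u ≤ t + 1 := by have := ecc_adj_le hT hu.symm; omega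
        have hge := hlbB u
        rcases eq_or_ne (ecc G u) (t + 1) with he | hne'
        · exact Or.inl he
        · exact Or.inr (partner_unique hT hu hadj.symm (by omega) (by omega))
      obtain ⟨hchx, hcross, houtx⟩ := half hT hxe hye hxyne hxa hecc_le hN1 hN3 hN4 hbx
        (Or.inl hy0.symm)
      obtain ⟨hchy, -, houty⟩ := half hT hye hxe (fun i hi he => (hxyne i hi) he.symm) hya
        hecc_le hN1 hN3 hN4 hby (Or.inl hx0.symm)
      exact swap_iso G k x y hxyfull hxinj hyinj hxa hya hchx hchy hcross houtx
        (fun i u hi hadj' hout => houty i u hi hadj' (fun j hj => ⟨(hout j hj).2, (hout j hj).1⟩))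
  case neg =>
    exfalso
    have H : ∀ i, s + 1 ≤ i → i ≤ D → ∀ a b : V, a ≠ b → ecc G a = i → ecc G b = i →
        ¬((∃ w, G.Adj w a ∧ G.Adj w b ∧ ecc G w + 1 = i) ∨ G.Adj a b) := by
      intro i hi1 hi2 a b hab ha hb hcon
      exact hB ⟨i, (hSmem i).mpr ⟨⟨hi1, hi2⟩, a, b, hab, ha, hb, hcon⟩⟩
    have hd1 : 2 * s + 1 ≤ D := by
      by_contra hlt
      push_neg at hlt
      have hmaps : ∀ v ∈ L (s+1), pa v ∈ L s := by
        intro v hv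
        have hev : ecc G v = s + 1 := (hLmem _ _).mp hv
        obtain ⟨-, hpe, -⟩ := hpa v (by omega)
        exact (hLmem _ _).mpr (by omega)
      obtain ⟨a, ha, b, hb, hab, heqp⟩ := Finset.exists_ne_map_eq_of_card_lt_of_maps_to h1 hmaps
      have hea : ecc G a = s + 1 := (hLmem _ _).mp ha
      have heb : ecc G b = s + 1 := (hLmem _ _).mp hb
      obtain ⟨hq1, hq2, -⟩ := hpa a (by omega)
      obtain ⟨hq1', hq2', -⟩ := hpa b (by omega)
      refine H (s+1) le_rfl hsD a b hab hea heb (Or.inl ⟨pa a, hq1.symm, ?_, by omega⟩)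
      rw [heqp]; exact hq1'.symm
    have hlb : ∀ v : V, s + 1 ≤ ecc G v := by
      intro v; have := hD2e v; omega
    have hd2 : s + 2 ≤ D := by
      by_contra hlt
      push_neg at hlt
      obtain ⟨a, ha⟩ := hDex
      obtain ⟨b, hb⟩ := exists_ecc G a
      have hab : G.Adj a b := by
        have h1d : G.dist a b = 1 := by omega
        exact SimpleGraph.dist_eq_one_iff_adj.mp h1d
      have heb : ecc G b = 1 := by
        have hh1 := hlb b
        have hh2 := hDle b
        omega
      exact H 1 (by omega) (by omega) a b hab.ne (by omega) heb (Or.inr hab)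
    have hdeg : ∀ v : V, G.degree v + (if ecc G v = s + 1 ∨ ecc G v = D then 1 else 0) ≤ 2 := by
      intro v
      by_cases hvD : ecc G v = D
      · have hdle : G.degree v ≤ 1 := by
          rw [← SimpleGraph.card_neighborFinset_eq_degree]
          apply Finset.card_le_one.mpr
          intro a ha b hb
          rw [SimpleGraph.mem_neighborFinset] at ha hb
          exact partner_unique hT ha hb (by rw [hvD]; exact hDle a) (by rw [hvD]; exact hDle b)
        rw [if_pos (Or.inr hvD)]
        omega
      · by_cases hv1 : ecc G v = s + 1
        · have hnb : ∀ u, G.Adj v u → ecc G u = s + 2 := by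
            intro u hu
            have hle : ecc G u ≤ s + 2 := by have := ecc_adj_le hT hu.symm; omega
            have hge := hlb u
            rcases eq_or_ne (ecc G u) (s+1) with he | hne'
            · exact absurd (Or.inr hu) (H (s+1) le_rfl hsD v u hu.ne hv1 he)
            · omega
          have hdle : G.degree v ≤ 1 := by
            rw [← SimpleGraph.card_neighborFinset_eq_degree]
            apply Finset.card_le_one.mpr
            intro a ha b hb
            rw [SimpleGraph.mem_neighborFinset] at ha hb
            by_contra hne'
            exact H (s+2) (by omega) hd2 a b hne' (hnb a ha) (hnb b hb)
              (Or.inl ⟨v, ha, hb, by omega⟩)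
          rw [if_pos (Or.inl hv1)]
          omega
        · have hvbig : D + 2 ≤ 2 * ecc G v := by have := hlb v; omega
          obtain ⟨hpad, hpe, hpu⟩ := hpa v hvbig
          have hvltD : ecc G v < D := lt_of_le_of_ne (hDle v) hvD
          have hdle : G.degree v ≤ 2 := by
            by_cases hch : ∃ cc, G.Adj v cc ∧ ecc G cc = ecc G v + 1
            · obtain ⟨cc, hc1, hc2⟩ := hch
              have hsub : G.neighborFinset v ⊆ {pa v, cc} := by
                intro a ha
                rw [SimpleGraph.mem_neighborFinset] at ha
                simp only [Finset.mem_insert, Finset.mem_singleton]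
                rcases eq_or_ne a (pa v) with rfl | hne'
                · exact Or.inl rfl
                · right
                  have hea := hpu a ha hne'
                  by_contra hac
                  exact H (ecc G v + 1) (by omega) (by omega) a cc hac hea hc2
                    (Or.inl ⟨v, ha, hc1, by omega⟩)
              calc G.degree v = (G.neighborFinset v).card :=
                    (SimpleGraph.card_neighborFinset_eq_degree _ _).symm
                _ ≤ ({pa v, cc} : Finset V).card := Finset.card_le_card hsub
                _ ≤ 2 := (Finset.card_insert_le _ _).trans (by simp)
            · have hsub : G.neighborFinset v ⊆ {pa v} := by
                intro a ha
                rw [SimpleGraph.mem_neighborFinset] at ha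
                simp only [Finset.mem_singleton]
                by_contra hne'
                exact hch ⟨a, ha, hpu a ha hne'⟩
              have h1' : G.degree v ≤ 1 := by
                rw [← SimpleGraph.card_neighborFinset_eq_degree]
                exact (Finset.card_le_card hsub).trans (by simp)
              omega
          rw [if_neg (by push_neg; exact ⟨hv1, hvD⟩)]
          omega
    have hsum := G.sum_degrees_eq_twice_card_edges
    have hedge := hT.card_edgeFinset
    have hLD2 : 2 ≤ (L D).card := by
      obtain ⟨a, ha⟩ := hDex
      obtain ⟨b, hb⟩ := exists_ecc G a
      have hab : a ≠ b := by
        intro e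
        subst e
        rw [SimpleGraph.dist_self] at hb
        have := hlb a
        omega
      have heb : ecc G b = D := by
        have hgeb : D ≤ ecc G b := by
          rw [← ha, ← hb, SimpleGraph.dist_comm]
          exact dist_le_ecc G b a
        exact le_antisymm (hDle b) hgeb
      have hsubab : ({a, b} : Finset V) ⊆ L D := by
        intro u hu
        simp only [Finset.mem_insert, Finset.mem_singleton] at hu
        rcases hu with rfl | rfl
        · exact (hLmem _ _).mpr ha
        · exact (hLmem _ _).mpr heb
      calc 2 = ({a, b} : Finset V).card := (Finset.card_pair hab).symm
        _ ≤ (L D).card := Finset.card_le_card hsubab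
    have hbound : ∑ v : V, (G.degree v + (if ecc G v = s + 1 ∨ ecc G v = D then 1 else 0))
        ≤ 2 * Fintype.card V := by
      calc ∑ v : V, (G.degree v + (if ecc G v = s + 1 ∨ ecc G v = D then 1 else 0))
          ≤ ∑ _v : V, 2 := Finset.sum_le_sum (fun v _ => hdeg v)
        _ = 2 * Fintype.card V := by
          rw [Finset.sum_const, Finset.card_univ, smul_eq_mul, mul_comm]
    rw [Finset.sum_add_distrib, hsum] at hbound
    have hite : ∑ v : V, (if ecc G v = s + 1 ∨ ecc G v = D then 1 else 0)
        = (L (s+1)).card + (L D).card := by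
      have hdisj : Disjoint (Finset.univ.filter fun v : V => ecc G v = s + 1)
          (Finset.univ.filter fun v : V => ecc G v = D) := by
        rw [Finset.disjoint_left]
        intro a haf hbf
        simp only [Finset.mem_filter, Finset.mem_univ, true_and] at haf hbf
        omega
      rw [← Finset.card_filter, Finset.filter_or, Finset.card_union_of_disjoint hdisj]
    rw [hite] at hbound
    omega
end

section
/- For D ≥ 2, any D-distinguishable tree of radius 2 has maximum degree at most D·2^D. -/
open SimpleGraph

/-- Build a graph automorphism from an involutive map preserving adjacency. -/
private def isoOfInvolutive {V : Type*} (G : SimpleGraph V) (p : V → V)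
    (hinv : Function.Involutive p)
    (hadj : ∀ a b, G.Adj a b → G.Adj (p a) (p b)) : G ≃g G where
  toEquiv := hinv.toPerm p
  map_rel_iff' := by
    intro a b
    simp only [Function.Involutive.coe_toPerm]
    constructor
    · intro hab
      have := hadj _ _ hab
      rwa [hinv a, hinv b] at this
    · intro hab
      exact hadj a b hab

private lemma isoOfInvolutive_apply {V : Type*} (G : SimpleGraph V) (p : V → V)
    (hinv : Function.Involutive p)
    (hadj : ∀ a b, G.Adj a b → G.Adj (p a) (p b)) (v : V) :
    isoOfInvolutive G p hinv hadj v = p v := rfl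

private lemma walk_eq_of_acyclic {V : Type*} {G : SimpleGraph V} (hA : G.IsAcyclic)
    {s t : V} (w1 w2 : G.Walk s t) (h1 : w1.IsPath) (h2 : w2.IsPath) : w1 = w2 :=
  congrArg Subtype.val (SimpleGraph.isAcyclic_iff_path_unique.mp hA ⟨w1, h1⟩ ⟨w2, h2⟩)

theorem maxDegree_le_of_distinguishable_radius_two
    {V : Type*} [Fintype V] (G : SimpleGraph V) [DecidableRel G.Adj]
    (hT : G.IsTree) (D : ℕ) (hD : 2 ≤ D)
    (hr : sInf (Set.range (ecc G)) = 2)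
    (h : Distinguishable G D) :
    G.maxDegree ≤ D * 2 ^ D := by
  classical
  obtain ⟨c, hc⟩ := h
  have hconn : G.Connected := hT.isConnected
  have hA : G.IsAcyclic := hT.IsAcyclic
  -- V is nonempty
  have hV : Nonempty V := by
    by_contra hV
    rw [not_nonempty_iff] at hV
    rw [Set.range_eq_empty, Nat.sInf_empty] at hr
    exact two_ne_zero hr.symm
  -- obtain a central vertex
  have hmem : (2 : ℕ) ∈ Set.range (ecc G) := hr ▸ Nat.sInf_mem (Set.range_nonempty _)
  obtain ⟨v0, hv0⟩ := hmem
  -- all vertices are within distance 2 of v0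
  have hd2 : ∀ x, G.dist v0 x ≤ 2 := by
    intro x
    have : G.dist v0 x ≤ ecc G v0 :=
      le_csSup (Set.Finite.bddAbove (Set.finite_range _)) ⟨x, rfl⟩
    omega
  -- two distinct neighbors of v0 are not adjacent
  have L1 : ∀ a b, G.Adj v0 a → G.Adj v0 b → ¬ G.Adj a b := by
    intro a b ha hb hab
    have h1 : (Walk.cons hab Walk.nil).IsPath := by
      simp [Walk.isPath_def, hab.ne]
    have h2 : (Walk.cons ha.symm (Walk.cons hb Walk.nil)).IsPath := by
      simp [Walk.isPath_def, ha.ne, ha.ne', hab.ne, hab.ne', hb.ne, hb.ne']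
    have := congrArg Walk.length (walk_eq_of_acyclic hA _ _ h1 h2)
    simp at this
  -- extract the middle vertex of a geodesic of length two
  have mid : ∀ x, G.dist v0 x = 2 → ∃ a, G.Adj v0 a ∧ G.Adj a x := by
    intro x hx
    obtain ⟨p, hp⟩ := SimpleGraph.exists_walk_of_dist_ne_zero (by omega : G.dist v0 x ≠ 0)
    rw [hx] at hp
    cases p with
    | nil => simp at hp
    | cons h q =>
      cases q with
      | nil => simp at hp
      | cons h' q' =>
        cases q' with
        | nil => exact ⟨_, h, h'⟩
        | cons h'' q'' => simp [Walk.length_cons] at hp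
  -- basic facts about distances
  have dist0 : ∀ x, G.dist v0 x = 0 ↔ x = v0 := by
    intro x
    rw [hconn.dist_eq_zero_iff]
    exact eq_comm
  -- a vertex adjacent to a vertex at distance 2 is a neighbor of v0
  have L2 : ∀ x y, G.dist v0 x = 2 → G.Adj x y → G.Adj v0 y := by
    intro x y hx hxy
    have hyne : y ≠ v0 := by
      intro hh
      subst hh
      have : G.dist y x = 1 := SimpleGraph.dist_eq_one_iff_adj.mpr hxy.symm
      omega
    have hy0 : G.dist v0 y ≠ 0 := by rw [ne_eq, dist0]; exact hyne
    have hy2 : G.dist v0 y ≤ 2 := hd2 y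
    rcases Nat.lt_or_ge (G.dist v0 y) 2 with hlt | hge
    · have : G.dist v0 y = 1 := by omega
      exact SimpleGraph.dist_eq_one_iff_adj.mp this
    · exfalso
      have hy : G.dist v0 y = 2 := by omega
      obtain ⟨a, hva, hax⟩ := mid x hx
      obtain ⟨b, hvb, hby⟩ := mid y hy
      have hxv0 : x ≠ v0 := by
        intro hh; subst hh; rw [SimpleGraph.dist_self] at hx; omega
      have hxa : x ≠ a := by
        rintro rfl
        have : G.dist v0 x = 1 := SimpleGraph.dist_eq_one_iff_adj.mpr hva
        omega
      have hxb : x ≠ b := by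
        rintro rfl
        have : G.dist v0 x = 1 := SimpleGraph.dist_eq_one_iff_adj.mpr hvb
        omega
      have hya : y ≠ a := by
        rintro rfl
        have : G.dist v0 y = 1 := SimpleGraph.dist_eq_one_iff_adj.mpr hva
        omega
      have hyb : y ≠ b := hby.ne'
      have h1 : (Walk.cons hxy Walk.nil).IsPath := by simp [Walk.isPath_def, hxy.ne]
      rcases eq_or_ne a b with rfl | hab
      · -- path x - a - y
        have h2 : (Walk.cons hax.symm (Walk.cons hby Walk.nil)).IsPath := by
          simp [Walk.isPath_def, hxa, Ne.symm hxa, hxy.ne, hxy.ne', hya, Ne.symm hya]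
        have := congrArg Walk.length (walk_eq_of_acyclic hA _ _ h1 h2)
        simp at this
      · -- path x - a - v0 - b - y
        have h2 : (Walk.cons hax.symm (Walk.cons hva.symm (Walk.cons hvb
            (Walk.cons hby Walk.nil)))).IsPath := by
          simp [Walk.isPath_def, hxa, Ne.symm hxa, hxv0, Ne.symm hxv0, hxb, Ne.symm hxb,
            hxy.ne, hxy.ne', hva.ne, hva.ne', hab, Ne.symm hab, hya, Ne.symm hya,
            hyne, Ne.symm hyne, hyb, Ne.symm hyb, hvb.ne, hvb.ne']
        have := congrArg Walk.length (walk_eq_of_acyclic hA _ _ h1 h2)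
        simp at this
  -- a vertex at distance two has a unique neighbor
  have L3 : ∀ u x y, G.Adj v0 u → G.Adj u x → x ≠ v0 → G.Adj x y → y = u := by
    intro u x y hu hux hxne hxy
    have hxv0 : ¬ G.Adj v0 x := fun hh => L1 u x hu hh hux
    have hx0 : G.dist v0 x ≠ 0 := by rw [ne_eq, dist0]; exact hxne
    have hx1 : G.dist v0 x ≠ 1 := fun hh => hxv0 (SimpleGraph.dist_eq_one_iff_adj.mp hh)
    have hx2 : G.dist v0 x = 2 := by have := hd2 x; omega
    have hy : G.Adj v0 y := L2 x y hx2 hxy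
    have h1 : (Walk.cons hu (Walk.cons hux Walk.nil)).IsPath := by
      simp [Walk.isPath_def, hu.ne, hu.ne', hux.ne, hux.ne', hxne, Ne.symm hxne]
    have h2 : (Walk.cons hy (Walk.cons hxy.symm Walk.nil)).IsPath := by
      simp [Walk.isPath_def, hy.ne, hy.ne', hxy.ne, hxy.ne', hxne, Ne.symm hxne]
    have := congrArg Walk.support (walk_eq_of_acyclic hA _ _ h1 h2)
    simp at this
    exact this.symm
  -- leaves of a branch have pairwise distinct colors
  have stepA : ∀ u, G.Adj v0 u → ∀ x y, G.Adj u x → G.Adj u y → x ≠ v0 → y ≠ v0 →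
      c x = c y → x = y := by
    intro u hu x y hux huy hxne hyne hcxy
    by_contra hxy
    have hNx : ∀ a b, G.Adj a b → G.Adj (Equiv.swap x y a) (Equiv.swap x y b) := by
      have key : ∀ z, G.Adj x z ↔ G.Adj y z := by
        intro z
        constructor
        · intro hz
          have := L3 u x z hu hux hxne hz
          subst this; exact huy.symm
        · intro hz
          have := L3 u y z hu huy hyne hz
          subst this; exact hux.symm
      have key' : ∀ z, G.Adj z x ↔ G.Adj z y := by
        intro z; rw [G.adj_comm z x, G.adj_comm z y]; exact key z
      have hnxy : ¬ G.Adj x y := fun hh => G.irrefl ((key y).mp hh)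
      intro a b hab
      by_cases hax : a = x
      · by_cases hby : b = y
        · rw [hax, hby] at hab; exact absurd hab hnxy
        · by_cases hbx : b = x
          · rw [hax, hbx] at hab; exact absurd hab (G.irrefl)
          · rw [hax, Equiv.swap_apply_left, Equiv.swap_apply_of_ne_of_ne hbx hby]
            rw [hax] at hab
            exact (key b).mp hab
      · by_cases hay : a = y
        · by_cases hbx : b = x
          · rw [hay, hbx] at hab; exact absurd hab.symm hnxy
          · by_cases hby : b = y
            · rw [hay, hby] at hab; exact absurd hab (G.irrefl)
            · rw [hay, Equiv.swap_apply_right, Equiv.swap_apply_of_ne_of_ne hbx hby]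
              rw [hay] at hab
              exact (key b).mpr hab
        · rw [Equiv.swap_apply_of_ne_of_ne hax hay]
          by_cases hbx : b = x
          · rw [hbx] at hab
            rw [hbx, Equiv.swap_apply_left]
            exact (key' a).mp hab
          · by_cases hby : b = y
            · rw [hby] at hab
              rw [hby, Equiv.swap_apply_right]
              exact (key' a).mpr hab
            · rw [Equiv.swap_apply_of_ne_of_ne hbx hby]
              exact hab
    have hsw : Function.Involutive (fun z => Equiv.swap x y z) := fun z => by
      simp
    let φ : G ≃g G := isoOfInvolutive G _ hsw hNx
    have cpres : ∀ v, c (φ v) = c v := by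
      intro v
      rw [isoOfInvolutive_apply]
      rcases eq_or_ne v x with rfl | hvx
      · simpa using hcxy.symm
      · rcases eq_or_ne v y with rfl | hvy
        · simpa using hcxy
        · simp [Equiv.swap_apply_of_ne_of_ne hvx hvy]
    have := hc φ cpres x
    rw [isoOfInvolutive_apply] at this
    simp at this
    exact hxy this.symm
  -- edge classification away from v0
  have edgeclass : ∀ a b, G.Adj a b → a ≠ v0 → b ≠ v0 →
      (G.Adj v0 a ∧ ¬ G.Adj v0 b) ∨ (G.Adj v0 b ∧ ¬ G.Adj v0 a) := by
    intro a b hab ha hb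
    by_cases hva : G.Adj v0 a
    · exact Or.inl ⟨hva, fun hvb => L1 a b hva hvb hab⟩
    · by_cases hvb : G.Adj v0 b
      · exact Or.inr ⟨hvb, hva⟩
      · exfalso
        have hb0 : G.dist v0 a ≠ 0 := by rw [ne_eq, dist0]; exact ha
        have hb1 : G.dist v0 a ≠ 1 := fun hh => hva (SimpleGraph.dist_eq_one_iff_adj.mp hh)
        have ha2 : G.dist v0 a = 2 := by have := hd2 a; omega
        exact hvb (L2 a b ha2 hab)
  -- now bound all degrees
  apply SimpleGraph.maxDegree_le_of_forall_degree_le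
  intro v
  have hbig : 4 ≤ 2 ^ D := by
    calc (4:ℕ) = 2 ^ 2 := by norm_num
    _ ≤ 2 ^ D := Nat.pow_le_pow_right (by norm_num) hD
  have hDbig : D + 1 ≤ D * 2 ^ D := by nlinarith
  rcases eq_or_ne v0 v with rfl | hvne
  · -- central vertex: the pigeonhole argument
    by_contra hdeg
    push_neg at hdeg
    -- signature map
    have hcard : D * 2 ^ D < (G.neighborFinset v0).card := by
      rwa [SimpleGraph.card_neighborFinset_eq_degree]
    set sig : V → Fin D × Finset (Fin D) :=
      fun u => (c u, ((G.neighborFinset u).erase v0).image c) with hsig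
    have hmaps : ∀ u ∈ G.neighborFinset v0, sig u ∈ (Finset.univ : Finset (Fin D × Finset (Fin D))) :=
      fun u _ => Finset.mem_univ _
    have huniv : (Finset.univ : Finset (Fin D × Finset (Fin D))).card = D * 2 ^ D := by
      simp [Fintype.card_prod, Fintype.card_finset]
    obtain ⟨u1, hu1s, u2, hu2s, hu12, hsigeq⟩ :=
      Finset.exists_ne_map_eq_of_card_lt_of_maps_to (by omega) hmaps
    rw [SimpleGraph.mem_neighborFinset] at hu1s hu2s
    have hcu : c u1 = c u2 := congrArg Prod.fst hsigeq
    set A : Finset V := (G.neighborFinset u1).erase v0 with hA'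
    set B : Finset V := (G.neighborFinset u2).erase v0 with hB'
    have himg : A.image c = B.image c := congrArg Prod.snd hsigeq
    have hmemA : ∀ {z}, z ∈ A ↔ (z ≠ v0 ∧ G.Adj u1 z) := by
      intro z; simp [hA', Finset.mem_erase, SimpleGraph.mem_neighborFinset]
    have hmemB : ∀ {z}, z ∈ B ↔ (z ≠ v0 ∧ G.Adj u2 z) := by
      intro z; simp [hB', Finset.mem_erase, SimpleGraph.mem_neighborFinset]
    have injA : ∀ x ∈ A, ∀ y ∈ A, c x = c y → x = y := by
      intro x hx y hy hcxy
      obtain ⟨hx1, hx2⟩ := hmemA.mp hx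
      obtain ⟨hy1, hy2⟩ := hmemA.mp hy
      exact stepA u1 hu1s x y hx2 hy2 hx1 hy1 hcxy
    have injB : ∀ x ∈ B, ∀ y ∈ B, c x = c y → x = y := by
      intro x hx y hy hcxy
      obtain ⟨hx1, hx2⟩ := hmemB.mp hx
      obtain ⟨hy1, hy2⟩ := hmemB.mp hy
      exact stepA u2 hu2s x y hx2 hy2 hx1 hy1 hcxy
    have hABdisj : ∀ z, z ∈ A → z ∈ B → False := by
      intro z hzA hzB
      obtain ⟨hz1, hz2⟩ := hmemA.mp hzA
      obtain ⟨hz3, hz4⟩ := hmemB.mp hzB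
      exact hu12 (L3 u1 z u2 hu1s hz2 hz1 hz4.symm).symm
    -- matching function between A and B
    have exq : ∀ z : V, ∃ w : V, (z ∈ A → (w ∈ B ∧ c w = c z)) ∧
        (z ∈ B → (w ∈ A ∧ c w = c z)) ∧ (z ∉ A → z ∉ B → w = z) := by
      intro z
      by_cases hzA : z ∈ A
      · have hzB : z ∉ B := fun hh => hABdisj z hzA hh
        have : c z ∈ B.image c := by rw [← himg]; exact Finset.mem_image_of_mem c hzA
        obtain ⟨w, hwB, hwc⟩ := Finset.mem_image.mp this
        exact ⟨w, fun _ => ⟨hwB, hwc⟩, fun hh => absurd hh hzB, fun hh _ => absurd hzA hh⟩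
      · by_cases hzB : z ∈ B
        · have : c z ∈ A.image c := by rw [himg]; exact Finset.mem_image_of_mem c hzB
          obtain ⟨w, hwA, hwc⟩ := Finset.mem_image.mp this
          exact ⟨w, fun hh => absurd hh hzA, fun _ => ⟨hwA, hwc⟩, fun _ hh => absurd hzB hh⟩
        · exact ⟨z, fun hh => absurd hh hzA, fun hh => absurd hh hzB, fun _ _ => rfl⟩
    choose q hqA hqB hqid using exq
    -- facts about membership of u1, u2, v0 in A, B
    have hu1A : u1 ∉ A := fun hh => G.irrefl (hmemA.mp hh).2
    have hu1B : u1 ∉ B := fun hh => L1 u2 u1 hu2s hu1s (hmemB.mp hh).2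
    have hu2A : u2 ∉ A := fun hh => L1 u1 u2 hu1s hu2s (hmemA.mp hh).2
    have hu2B : u2 ∉ B := fun hh => G.irrefl (hmemB.mp hh).2
    have hv0A : v0 ∉ A := fun hh => (hmemA.mp hh).1 rfl
    have hv0B : v0 ∉ B := fun hh => (hmemB.mp hh).1 rfl
    -- the branch-swapping involution
    set p : V → V := fun z => if z = u1 then u2 else if z = u2 then u1 else q z with hp
    have hqAmem : ∀ z, z ∈ A → (q z ∈ B ∧ c (q z) = c z) := fun z hz => hqA z hz
    have hqBmem : ∀ z, z ∈ B → (q z ∈ A ∧ c (q z) = c z) := fun z hz => hqB z hz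
    have hpA : ∀ z, z ∈ A → p z = q z := by
      intro z hz
      have h1 : z ≠ u1 := fun hh => hu1A (hh ▸ hz)
      have h2 : z ≠ u2 := fun hh => hu2A (hh ▸ hz)
      simp [hp, h1, h2]
    have hpB : ∀ z, z ∈ B → p z = q z := by
      intro z hz
      have h1 : z ≠ u1 := fun hh => hu1B (hh ▸ hz)
      have h2 : z ≠ u2 := fun hh => hu2B (hh ▸ hz)
      simp [hp, h1, h2]
    have hpid : ∀ z, z ≠ u1 → z ≠ u2 → z ∉ A → z ∉ B → p z = z := by
      intro z h1 h2 h3 h4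
      simp [hp, h1, h2, hqid z h3 h4]
    have hpu1 : p u1 = u2 := by simp [hp]
    have hpu2 : p u2 = u1 := by simp [hp, Ne.symm hu12]
    have hpv0 : p v0 = v0 := hpid v0 (fun hh => hu1s.ne (hh ▸ rfl)) (fun hh => hu2s.ne (hh ▸ rfl)) hv0A hv0B
    have hinv : Function.Involutive p := by
      intro z
      by_cases h1 : z = u1
      · rw [h1, hpu1, hpu2]
      · by_cases h2 : z = u2
        · rw [h2, hpu2, hpu1]
        · by_cases hzA : z ∈ A
          · obtain ⟨hqB', hqc⟩ := hqAmem z hzA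
            rw [hpA z hzA, hpB (q z) hqB']
            obtain ⟨hqA', hqc'⟩ := hqBmem (q z) hqB'
            exact injA _ hqA' _ hzA (by rw [hqc', hqc])
          · by_cases hzB : z ∈ B
            · obtain ⟨hqA', hqc⟩ := hqBmem z hzB
              rw [hpB z hzB, hpA (q z) hqA']
              obtain ⟨hqB', hqc'⟩ := hqAmem (q z) hqA'
              exact injB _ hqB' _ hzB (by rw [hqc', hqc])
            · rw [hpid z h1 h2 hzA hzB, hpid z h1 h2 hzA hzB]
    -- the image of a neighbor of v0 is a neighbor of v0
    have hnbr : ∀ b, G.Adj v0 b → G.Adj v0 (p b) := by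
      intro b hb
      by_cases h1 : b = u1
      · rw [h1, hpu1]; exact hu2s
      · by_cases h2 : b = u2
        · rw [h2, hpu2]; exact hu1s
        · have hbA : b ∉ A := fun hh => L1 u1 b hu1s hb (hmemA.mp hh).2
          have hbB : b ∉ B := fun hh => L1 u2 b hu2s hb (hmemB.mp hh).2
          rw [hpid b h1 h2 hbA hbB]; exact hb
    -- core adjacency preservation: edges from a neighbor of v0 to a leaf
    have core : ∀ a b, G.Adj v0 a → G.Adj a b → b ≠ v0 → G.Adj (p a) (p b) := by
      intro a b hva hab hbne
      have hvb : ¬ G.Adj v0 b := fun hh => L1 a b hva hh hab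
      by_cases h1 : a = u1
      · have hbA : b ∈ A := hmemA.mpr ⟨hbne, h1 ▸ hab⟩
        rw [h1, hpu1, hpA b hbA]
        exact (hmemB.mp (hqAmem b hbA).1).2
      · by_cases h2 : a = u2
        · have hbB : b ∈ B := hmemB.mpr ⟨hbne, h2 ▸ hab⟩
          rw [h2, hpu2, hpB b hbB]
          exact (hmemA.mp (hqBmem b hbB).1).2
        · have haA : a ∉ A := fun hh => L1 u1 a hu1s hva (hmemA.mp hh).2
          have haB : a ∉ B := fun hh => L1 u2 a hu2s hva (hmemB.mp hh).2
          rw [hpid a h1 h2 haA haB]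
          have hb1 : b ≠ u1 := fun hh => hvb (hh ▸ hu1s)
          have hb2 : b ≠ u2 := fun hh => hvb (hh ▸ hu2s)
          have hbA : b ∉ A := by
            intro hh
            exact h1 (L3 a b u1 hva hab hbne (hmemA.mp hh).2.symm).symm
          have hbB : b ∉ B := by
            intro hh
            exact h2 (L3 a b u2 hva hab hbne (hmemB.mp hh).2.symm).symm
          rw [hpid b hb1 hb2 hbA hbB]
          exact hab
    have hadj : ∀ a b, G.Adj a b → G.Adj (p a) (p b) := by
      intro a b hab
      rcases eq_or_ne a v0 with rfl | ha
      · rw [hpv0]; exact hnbr b hab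
      · rcases eq_or_ne b v0 with rfl | hb
        · rw [hpv0]; exact (hnbr a hab.symm).symm
        · rcases edgeclass a b hab ha hb with ⟨hva, _⟩ | ⟨hvb, _⟩
          · exact core a b hva hab hb
          · exact (core b a hvb hab.symm ha).symm
    let φ : G ≃g G := isoOfInvolutive G p hinv hadj
    have cpres : ∀ v, c (φ v) = c v := by
      intro v
      rw [isoOfInvolutive_apply]
      by_cases h1 : v = u1
      · rw [h1, hpu1]; exact hcu.symm
      · by_cases h2 : v = u2
        · rw [h2, hpu2]; exact hcu
        · by_cases hvA : v ∈ A
          · rw [hpA v hvA]; exact (hqAmem v hvA).2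
          · by_cases hvB : v ∈ B
            · rw [hpB v hvB]; exact (hqBmem v hvB).2
            · rw [hpid v h1 h2 hvA hvB]
    have := hc φ cpres u1
    rw [isoOfInvolutive_apply, hpu1] at this
    exact hu12 this.symm
  · -- non-central vertices
    have hv0ne : G.dist v0 v ≠ 0 := by rw [ne_eq, dist0]; exact Ne.symm hvne
    rcases Nat.lt_or_ge (G.dist v0 v) 2 with hlt | hge
    · -- v is adjacent to v0
      have hv1 : G.dist v0 v = 1 := by omega
      have hadjv : G.Adj v0 v := SimpleGraph.dist_eq_one_iff_adj.mp hv1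
      have hsub : G.neighborFinset v ⊆ insert v0 ((G.neighborFinset v).erase v0) := by
        intro x hx
        by_cases hxne : x = v0
        · exact Finset.mem_insert.mpr (Or.inl hxne)
        · exact Finset.mem_insert_of_mem (Finset.mem_erase.mpr ⟨hxne, hx⟩)
      have hcard1 : ((G.neighborFinset v).erase v0).card ≤ D := by
        have := Finset.card_le_card_of_injOn c
          (fun x _ => Finset.mem_univ (c x) : ∀ x ∈ (G.neighborFinset v).erase v0,
            c x ∈ (Finset.univ : Finset (Fin D)))
          (by
            intro x hx y hy hcxy
            simp only [Finset.coe_erase, Set.mem_diff, Finset.mem_coe,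
              SimpleGraph.mem_neighborFinset, Set.mem_singleton_iff] at hx hy
            exact stepA v hadjv x y hx.1 hy.1 hx.2 hy.2 hcxy)
        simpa using this
      have : G.degree v ≤ D + 1 := by
        have := Finset.card_le_card hsub
        have h2 := Finset.card_insert_le v0 ((G.neighborFinset v).erase v0)
        rw [← SimpleGraph.card_neighborFinset_eq_degree]
        omega
      omega
    · -- v is at distance 2: it is a leaf
      have hv2 : G.dist v0 v = 2 := by have := hd2 v; omega
      have hle1 : G.degree v ≤ 1 := by
        rw [← SimpleGraph.card_neighborFinset_eq_degree]
        apply Finset.card_le_one.mpr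
        intro a ha b hb
        rw [SimpleGraph.mem_neighborFinset] at ha hb
        have hva : G.Adj v0 a := L2 v a hv2 ha
        exact (L3 a v b hva ha.symm (Ne.symm hvne) hb).symm ▸ rfl
      have : 0 < D * 2 ^ D := Nat.mul_pos (by omega) (Nat.two_pow_pos D)
      omega
end
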